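/- Let n ∈ ℤ, n ≠ 0, and let x : (0,∞) → ℝ³ be twice differentiable with x(t) ≠ 0, satisfying x''(t) + t^{-(n+2)/2} ‖x(t)‖^{n-2} x(t) = 0. Then the function I(t) = 2t (½‖x'(t)‖² + (1/n) t^{-(n+2)/2}‖x(t)‖ⁿ) - ⟨x(t), x'(t)⟩ is constant. -/

import Mathlib

open Real RealInnerProductSpace

/-!
Differentiating `I` along a solution, the kinetic terms cancel, and by the equation of motion so
do the terms in `⟪x, x'⟫`; what is left is `(1 + 2 (α + 1) / n) tᵅ ‖x‖ⁿ` for the frequency `ω(t) = tᵅ`. The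
exponent `α = -(n + 2) / 2` is exactly the one for which this coefficient vanishes, so `I` has zero
derivative on `(0, ∞)` and is therefore constant there.
-/

variable {E : Type*} [NormedAddCommGroup E] [InnerProductSpace ℝ E]

theorem HasDerivAt.norm_of_ne_zero {x : ℝ → E} {v : E} {t : ℝ} (hx : HasDerivAt x v t)
    (h0 : x t ≠ 0) : HasDerivAt (fun u => ‖x u‖) (⟪x t, v⟫ / ‖x t‖) t := by
  have hsq : ‖x t‖ ^ 2 ≠ 0 := by positivity
  convert hx.norm_sq.sqrt hsq using 1
  · simp only [Real.sqrt_sq (norm_nonneg _)]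
  · rw [Real.sqrt_sq (norm_nonneg _)]
    field_simp

theorem HasDerivAt.norm_zpow {x : ℝ → E} {v : E} {t : ℝ} (hx : HasDerivAt x v t)
    (h0 : x t ≠ 0) (m : ℤ) :
    HasDerivAt (fun u => ‖x u‖ ^ m) (m * ‖x t‖ ^ (m - 2) * ⟪x t, v⟫) t := by
  have hr : ‖x t‖ ≠ 0 := norm_ne_zero_iff.mpr h0
  refine ((hasDerivAt_zpow m _ (Or.inl hr)).comp t (hx.norm_of_ne_zero h0)).congr_deriv ?_
  rw [show m - 1 = m - 2 + 1 by ring, zpow_add_one₀ hr]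
  field_simp

/-- The Noether integral of `x'' + ω(t) ‖x‖ⁿ⁻² x = 0` for `ω(t) = tᵅ`, with `v` standing for `x'`. -/
noncomputable def noetherIntegral (n : ℤ) (α : ℝ) (x v : ℝ → E) (t : ℝ) : ℝ :=
  2 * t * ((1/2) * ‖v t‖ ^ 2 + (1 / (n:ℝ)) * t ^ α * ‖x t‖ ^ n) - ⟪x t, v t⟫

theorem hasDerivAt_noetherIntegral {n : ℤ} (hn : n ≠ 0) (α : ℝ) {x v : ℝ → E} {a : E} {t : ℝ}
    (ht : t ≠ 0) (hx : HasDerivAt x (v t) t) (hv : HasDerivAt v a t) (h0 : x t ≠ 0)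
    (hmotion : a + (t ^ α * ‖x t‖ ^ (n - 2)) • x t = 0) :
    HasDerivAt (noetherIntegral n α x v) ((1 + 2 * (α + 1) / n) * t ^ α * ‖x t‖ ^ n) t := by
  have hpow : HasDerivAt (fun u : ℝ => u ^ α) (α * t ^ (α - 1)) t :=
    Real.hasDerivAt_rpow_const (Or.inl ht)
  have hI := (((hasDerivAt_id t).const_mul 2).mul ((hv.norm_sq.const_mul (1/2)).add
    ((hpow.const_mul (1 / (n:ℝ))).mul (hx.norm_zpow h0 n)))).sub (hx.inner ℝ hv)
  refine hI.congr_deriv ?_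
  rw [eq_neg_of_add_eq_zero_left hmotion]
  have hnR : (n:ℝ) ≠ 0 := Int.cast_ne_zero.mpr hn
  have hr : ‖x t‖ ≠ 0 := norm_ne_zero_iff.mpr h0
  simp only [inner_neg_right, real_inner_smul_right, real_inner_self_eq_norm_sq,
    real_inner_comm (x t) (v t), Real.rpow_sub_one ht, zpow_sub₀ hr, id, Pi.add_apply,
    Pi.mul_apply]
  field_simp
  ring

/-- the Noether first integral
`I t = 2t (½‖x'‖² + (1/n) t^{-(n+2)/2} ‖x‖ⁿ) - ⟪x, x'⟫` for the generalized
time-dependent central potential with `ω(t) = t^{-(n+2)/2}` is constant on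
`(0,∞)`. -/
theorem central_noether_integral
    (n : ℤ) (hn : n ≠ 0)
    (x : ℝ → EuclideanSpace ℝ (Fin 3))
    (hx : ∀ t > (0:ℝ), DifferentiableAt ℝ x t)
    (hx' : ∀ t > (0:ℝ), DifferentiableAt ℝ (deriv x) t)
    (hne : ∀ t > (0:ℝ), x t ≠ 0)
    (heq : ∀ t > (0:ℝ),
      deriv (deriv x) t
        + (t ^ (-((n:ℝ) + 2) / 2) * ‖x t‖ ^ (n - 2)) • x t = 0)
    (I : ℝ → ℝ)
    (hI : ∀ t, I t = 2 * t * ((1/2) * ‖deriv x t‖ ^ 2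
        + (1 / (n:ℝ)) * t ^ (-((n:ℝ) + 2) / 2) * ‖x t‖ ^ (n : ℤ))
        - ⟪x t, deriv x t⟫) :
    ∀ t₁ > (0:ℝ), ∀ t₂ > (0:ℝ), I t₁ = I t₂ := by
  have hnR : (n:ℝ) ≠ 0 := Int.cast_ne_zero.mpr hn
  have hcoeff : 1 + 2 * (-((n:ℝ) + 2) / 2 + 1) / n = 0 := by
    field_simp
    ring
  have hI' : I = noetherIntegral n (-((n:ℝ) + 2) / 2) x (deriv x) := funext hI
  have hderiv : ∀ t > (0:ℝ), HasDerivAt I 0 t := fun t ht => by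
    have h := hasDerivAt_noetherIntegral hn _ ht.ne' (hx t ht).hasDerivAt (hx' t ht).hasDerivAt
      (hne t ht) (heq t ht)
    rwa [hcoeff, zero_mul, zero_mul, ← hI'] at h
  intro t₁ ht₁ t₂ ht₂
  exact isOpen_Ioi.is_const_of_deriv_eq_zero (convex_Ioi 0).isPreconnected
    (fun t ht => (hderiv t ht).differentiableAt.differentiableWithinAt)
    (fun t ht => (hderiv t ht).deriv) ht₁ ht₂
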